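/- For p ∈ (0, 1/4), there exists a unique x_p ∈ (0,1) such that the function h_p(x) = (1-x)^p · K(x) is strictly increasing on (0, x_p) and strictly decreasing on (x_p, 1); moreover x_p is the unique zero in (0,1) of E(x) + ((1-2p)x - 1)·K(x). -/

import Mathlib

/-!
Differentiating under the integral sign, and integrating `d/dt [sin t cos t (1 - x sin² t)^{-1/2}]`
to get `∫ (1 - x sin² t)^{-3/2} = E/(1-x)`, gives `K' = (E/(1-x) - K)/(2x)`, hence
`d/dx [(1-x)^p K] = (1-x)^{p-1} K/2 · (1 - 2p - W)` with `W = (K - E)/(xK)`.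
`W` is strictly increasing because `W' > 0` is the strict Cauchy–Schwarz inequality
`(1-x) K² < E²`. Near `0`, `W ≤ (1-x)^{-1/2}/2` is close to `1/2`; near `1`, `W ≥ 1 - E/K` is
close to `1` because `K` grows logarithmically while `E ≤ π/2`. As `1/2 < 1 - 2p < 1`, `W`
crosses `1 - 2p` exactly once, and that point is `x_p`.
-/

open Real Set Filter

noncomputable def K (x : ℝ) : ℝ :=
  ∫ t in (0 : ℝ)..(π / 2), (1 - x * Real.sin t ^ 2) ^ (-(1/2) : ℝ)

noncomputable def E (x : ℝ) : ℝ :=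
  ∫ t in (0 : ℝ)..(π / 2), (1 - x * Real.sin t ^ 2) ^ ((1/2) : ℝ)

open MeasureTheory Metric Topology

lemma strictMonoOn_Ioo_of_hasDerivAt_pos {f f' : ℝ → ℝ} {a b : ℝ}
    (hf : ∀ x ∈ Ioo a b, HasDerivAt f (f' x) x) (hf' : ∀ x ∈ Ioo a b, 0 < f' x) :
    StrictMonoOn f (Ioo a b) :=
  strictMonoOn_of_hasDerivWithinAt_pos (convex_Ioo a b)
    (fun x hx => (hf x hx).continuousAt.continuousWithinAt)
    (fun x hx => (hf x (interior_subset hx)).hasDerivWithinAt)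
    (fun x hx => hf' x (interior_subset hx))

lemma strictAntiOn_Ioo_of_hasDerivAt_neg {f f' : ℝ → ℝ} {a b : ℝ}
    (hf : ∀ x ∈ Ioo a b, HasDerivAt f (f' x) x) (hf' : ∀ x ∈ Ioo a b, f' x < 0) :
    StrictAntiOn f (Ioo a b) :=
  strictAntiOn_of_hasDerivWithinAt_neg (convex_Ioo a b)
    (fun x hx => (hf x hx).continuousAt.continuousWithinAt)
    (fun x hx => (hf x (interior_subset hx)).hasDerivWithinAt)
    (fun x hx => hf' x (interior_subset hx))

lemma rpow_one_half_eq {u : ℝ} (hu : 0 < u) : u ^ (1/2 : ℝ) = u ^ (-(3/2) : ℝ) * u ^ 2 := by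
  rw [← rpow_add_natCast hu.ne']; norm_num

lemma rpow_neg_one_half_eq {u : ℝ} (hu : 0 < u) :
    u ^ (-(1/2) : ℝ) = u ^ (-(3/2) : ℝ) * u := by
  rw [← rpow_add_one hu.ne']; norm_num

lemma sq_rpow_neg_one_half {s : ℝ} (hs : 0 ≤ s) : (s ^ 2) ^ (-(1/2) : ℝ) = s⁻¹ := by
  rw [← rpow_natCast, ← rpow_mul hs]; norm_num [rpow_neg_one]

section Integrand

variable {x : ℝ}

lemma one_sub_mul_sin_sq_pos (hx : x < 1) (t : ℝ) : 0 < 1 - x * sin t ^ 2 := by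
  nlinarith [sin_sq_le_one t, sq_nonneg (sin t), mul_nonneg (sq_nonneg (sin t)) (sq_nonneg x)]

lemma one_sub_le_one_sub_mul_sin_sq (hx : 0 ≤ x) (t : ℝ) : 1 - x ≤ 1 - x * sin t ^ 2 := by
  nlinarith [sin_sq_le_one t]

lemma one_sub_mul_sin_sq_le_one (hx : 0 ≤ x) (t : ℝ) : 1 - x * sin t ^ 2 ≤ 1 := by
  nlinarith [sq_nonneg (sin t)]

lemma continuous_one_sub_mul_sin_sq_rpow (hx : x < 1) (c : ℝ) :
    Continuous fun t => (1 - x * sin t ^ 2) ^ c :=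
  (by fun_prop : Continuous fun t => 1 - x * sin t ^ 2).rpow_const
    fun t => Or.inl (one_sub_mul_sin_sq_pos hx t).ne'

lemma intervalIntegrable_one_sub_mul_sin_sq_rpow (hx : x < 1) (c a b : ℝ) :
    IntervalIntegrable (fun t => (1 - x * sin t ^ 2) ^ c) volume a b :=
  (continuous_one_sub_mul_sin_sq_rpow hx c).intervalIntegrable a b

end Integrand

noncomputable def ellipticMoment (c x : ℝ) : ℝ :=
  ∫ t in (0 : ℝ)..(π / 2), (1 - x * sin t ^ 2) ^ c

lemma K_eq_ellipticMoment : K = ellipticMoment (-(1/2)) := rfl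

lemma E_eq_ellipticMoment : E = ellipticMoment (1/2) := rfl

section EllipticMoment

variable {c x : ℝ}

lemma hasDerivAt_ellipticMoment_integral (hc : c ≤ 1) (hx : x < 1) :
    HasDerivAt (ellipticMoment c)
      (∫ t in (0 : ℝ)..(π / 2), c * (1 - x * sin t ^ 2) ^ (c - 1) * -sin t ^ 2) x := by
  set m := min 1 ((1 - x) / 2)
  have hm : 0 < m := lt_min one_pos (by linarith)
  have hball : ball x ((1 - x) / 2) ∈ 𝓝 x := ball_mem_nhds x (by linarith)
  have hlow : ∀ y ∈ ball x ((1 - x) / 2), ∀ t, m ≤ 1 - y * sin t ^ 2 := by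
    intro y hy t
    have hy : y < 1 - (1 - x) / 2 := by
      rw [mem_ball, Real.dist_eq] at hy
      linarith [(abs_lt.1 hy).2]
    have := min_le_left 1 ((1 - x) / 2)
    have := min_le_right 1 ((1 - x) / 2)
    rcases le_or_gt y 0 with hy0 | hy0
    · nlinarith [sq_nonneg (sin t)]
    · nlinarith [sin_sq_le_one t]
  refine (intervalIntegral.hasDerivAt_integral_of_dominated_loc_of_deriv_le
    (F' := fun y t => c * (1 - y * sin t ^ 2) ^ (c - 1) * -sin t ^ 2)
    (bound := fun _ => |c| * m ^ (c - 1)) hball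
    (Eventually.of_forall fun y =>
      (by fun_prop : Measurable fun t => (1 - y * sin t ^ 2) ^ c).aestronglyMeasurable)
    (intervalIntegrable_one_sub_mul_sin_sq_rpow hx c 0 (π / 2))
    ((continuous_const.mul (continuous_one_sub_mul_sin_sq_rpow hx (c - 1))).mul
      (continuous_sin.pow 2).neg).aestronglyMeasurable
    ?_ intervalIntegrable_const ?_).2
  · refine Eventually.of_forall fun t _ y hy => ?_
    have hu := hlow y hy t
    rw [norm_mul, norm_mul, norm_neg, Real.norm_eq_abs,
      Real.norm_of_nonneg (rpow_nonneg (hm.le.trans hu) _), Real.norm_of_nonneg (sq_nonneg _)]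
    have hpow : (1 - y * sin t ^ 2) ^ (c - 1) ≤ m ^ (c - 1) :=
      rpow_le_rpow_of_nonpos hm hu (by linarith)
    calc |c| * (1 - y * sin t ^ 2) ^ (c - 1) * sin t ^ 2
        ≤ |c| * m ^ (c - 1) * 1 := by gcongr; exact sin_sq_le_one t
      _ = |c| * m ^ (c - 1) := mul_one _
  · refine Eventually.of_forall fun t _ y hy => ?_
    have hu := hm.trans_le (hlow y hy t)
    have hlin : HasDerivAt (fun y => 1 - y * sin t ^ 2) (-sin t ^ 2) y := by
      simpa using ((hasDerivAt_id y).mul_const (sin t ^ 2)).const_sub 1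
    exact (hlin.rpow_const (Or.inl hu.ne')).congr_deriv (by ring)

lemma hasDerivAt_ellipticMoment (hc : c ≤ 1) (hx : x < 1) (hx₀ : x ≠ 0) :
    HasDerivAt (ellipticMoment c)
      (c * (ellipticMoment c x - ellipticMoment (c - 1) x) / x) x := by
  convert hasDerivAt_ellipticMoment_integral hc hx using 1
  have hpt : ∀ t ∈ uIcc (0 : ℝ) (π / 2), c * (1 - x * sin t ^ 2) ^ (c - 1) * -sin t ^ 2 =
      c * ((1 - x * sin t ^ 2) ^ c - (1 - x * sin t ^ 2) ^ (c - 1)) / x := by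
    intro t _
    rw [rpow_sub_one (one_sub_mul_sin_sq_pos hx t).ne']
    field_simp [(one_sub_mul_sin_sq_pos hx t).ne']
    ring
  rw [intervalIntegral.integral_congr hpt, intervalIntegral.integral_div,
    intervalIntegral.integral_const_mul, intervalIntegral.integral_sub
      (intervalIntegrable_one_sub_mul_sin_sq_rpow hx _ _ _)
      (intervalIntegrable_one_sub_mul_sin_sq_rpow hx _ _ _)]
  rfl

lemma one_sub_mul_ellipticMoment_neg_three_halves (hx : x < 1) :
    (1 - x) * ellipticMoment (-(3/2)) x = E x := by
  have hderiv : ∀ t ∈ uIcc (0 : ℝ) (π / 2),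
      HasDerivAt (fun t => x * (sin t * cos t * (1 - x * sin t ^ 2) ^ (-(1/2) : ℝ)))
        ((1 - x * sin t ^ 2) ^ (1/2 : ℝ) - (1 - x) * (1 - x * sin t ^ 2) ^ (-(3/2) : ℝ)) t := by
    intro t _
    have hu := one_sub_mul_sin_sq_pos hx t
    have hlin : HasDerivAt (fun t => 1 - x * sin t ^ 2) (-(x * (2 * sin t * cos t))) t := by
      simpa using (((hasDerivAt_sin t).pow 2).const_mul x).const_sub 1
    refine ((((hasDerivAt_sin t).mul (hasDerivAt_cos t)).mul
      (hlin.rpow_const (p := -(1/2)) (Or.inl hu.ne'))).const_mul x).congr_deriv ?_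
    rw [Pi.mul_apply, rpow_one_half_eq hu, rpow_neg_one_half_eq hu,
      show (-(1/2) : ℝ) - 1 = -(3/2) by norm_num]
    linear_combination x * (1 - x * sin t ^ 2) ^ (-(3/2) : ℝ) * cos_sq' t
  have hint := intervalIntegral.integral_eq_sub_of_hasDerivAt hderiv
    ((intervalIntegrable_one_sub_mul_sin_sq_rpow hx _ _ _).sub
      ((intervalIntegrable_one_sub_mul_sin_sq_rpow hx _ _ _).const_mul (1 - x)))
  rw [intervalIntegral.integral_sub (intervalIntegrable_one_sub_mul_sin_sq_rpow hx _ _ _)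
    ((intervalIntegrable_one_sub_mul_sin_sq_rpow hx _ _ _).const_mul (1 - x)),
    intervalIntegral.integral_const_mul] at hint
  simp only [cos_pi_div_two, sin_zero, mul_zero, zero_mul, sub_zero] at hint
  rw [E_eq_ellipticMoment, ellipticMoment, ellipticMoment]
  linarith

end EllipticMoment

section CompleteEllipticIntegrals

variable {x : ℝ}

lemma hasDerivAt_K (hx : x < 1) (hx₀ : x ≠ 0) :
    HasDerivAt K ((E x / (1 - x) - K x) / (2 * x)) x := by
  rw [K_eq_ellipticMoment, ← one_sub_mul_ellipticMoment_neg_three_halves hx]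
  convert hasDerivAt_ellipticMoment (c := -(1/2)) (by norm_num) hx hx₀ using 1
  rw [show (-(1/2) : ℝ) - 1 = -(3/2) by norm_num]
  field_simp [sub_ne_zero.2 hx.ne']
  ring

lemma hasDerivAt_E (hx : x < 1) (hx₀ : x ≠ 0) : HasDerivAt E ((E x - K x) / (2 * x)) x := by
  rw [E_eq_ellipticMoment, K_eq_ellipticMoment]
  convert hasDerivAt_ellipticMoment (c := 1/2) (by norm_num) hx hx₀ using 1
  rw [show (1/2 : ℝ) - 1 = -(1/2) by norm_num]
  ring

lemma pi_div_two_le_K (hx₀ : 0 ≤ x) (hx : x < 1) : π / 2 ≤ K x := by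
  have := intervalIntegral.integral_mono_on pi_div_two_pos.le intervalIntegrable_const
    (intervalIntegrable_one_sub_mul_sin_sq_rpow hx (-(1/2)) _ _) fun t _ =>
      one_le_rpow_of_pos_of_le_one_of_nonpos (one_sub_mul_sin_sq_pos hx t)
        (one_sub_mul_sin_sq_le_one hx₀ t) (by norm_num)
  simpa [K] using this

lemma K_pos (hx₀ : 0 ≤ x) (hx : x < 1) : 0 < K x :=
  pi_div_two_pos.trans_le (pi_div_two_le_K hx₀ hx)

lemma E_le_pi_div_two (hx₀ : 0 ≤ x) (hx : x < 1) : E x ≤ π / 2 := by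
  have := intervalIntegral.integral_mono_on pi_div_two_pos.le
    (intervalIntegrable_one_sub_mul_sin_sq_rpow hx (1/2) _ _) intervalIntegrable_const
    fun t _ => rpow_le_one (one_sub_mul_sin_sq_pos hx t).le
      (one_sub_mul_sin_sq_le_one hx₀ t) (by norm_num)
  simpa [E] using this

lemma E_pos (hx : x < 1) : 0 < E x :=
  intervalIntegral.intervalIntegral_pos_of_pos
    (intervalIntegrable_one_sub_mul_sin_sq_rpow hx _ _ _)
    (fun t => rpow_pos_of_pos (one_sub_mul_sin_sq_pos hx t) _) pi_div_two_pos

lemma K_sub_E_eq (hx : x < 1) :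
    K x - E x =
      x * ∫ t in (0 : ℝ)..(π / 2), sin t ^ 2 * (1 - x * sin t ^ 2) ^ (-(1/2) : ℝ) := by
  have hpt : ∀ t ∈ uIcc (0 : ℝ) (π / 2),
      (1 - x * sin t ^ 2) ^ (-(1/2) : ℝ) - (1 - x * sin t ^ 2) ^ (1/2 : ℝ) =
        x * (sin t ^ 2 * (1 - x * sin t ^ 2) ^ (-(1/2) : ℝ)) := by
    intro t _
    have hu := one_sub_mul_sin_sq_pos hx t
    rw [rpow_one_half_eq hu, rpow_neg_one_half_eq hu]
    ring
  rw [K, E, ← intervalIntegral.integral_sub (intervalIntegrable_one_sub_mul_sin_sq_rpow hx _ _ _)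
    (intervalIntegrable_one_sub_mul_sin_sq_rpow hx _ _ _), intervalIntegral.integral_congr hpt,
    intervalIntegral.integral_const_mul]

lemma integral_sin_sq_mul_rpow_pos (hx : x < 1) :
    0 < ∫ t in (0 : ℝ)..(π / 2), sin t ^ 2 * (1 - x * sin t ^ 2) ^ (-(1/2) : ℝ) :=
  intervalIntegral.intervalIntegral_pos_of_pos_on
    (((continuous_sin.pow 2).mul (continuous_one_sub_mul_sin_sq_rpow hx _)).intervalIntegrable _ _)
    (fun t ht => mul_pos (pow_pos (sin_pos_of_pos_of_lt_pi ht.1 (by linarith [ht.2, pi_pos])) 2)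
      (rpow_pos_of_pos (one_sub_mul_sin_sq_pos hx t) _))
    pi_div_two_pos

lemma integral_sin_sq_mul_rpow_le (hx₀ : 0 ≤ x) (hx : x < 1) :
    ∫ t in (0 : ℝ)..(π / 2), sin t ^ 2 * (1 - x * sin t ^ 2) ^ (-(1/2) : ℝ) ≤
      (1 - x) ^ (-(1/2) : ℝ) * (π / 4) := by
  have hmono := intervalIntegral.integral_mono_on
    (f := fun t => sin t ^ 2 * (1 - x * sin t ^ 2) ^ (-(1/2) : ℝ))
    (g := fun t => (1 - x) ^ (-(1/2) : ℝ) * sin t ^ 2) pi_div_two_pos.le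
    (((continuous_sin.pow 2).mul (continuous_one_sub_mul_sin_sq_rpow hx _)).intervalIntegrable _ _)
    (((continuous_sin.pow 2).intervalIntegrable (μ := volume) 0 (π / 2)).const_mul _)
    fun t _ => by
      rw [mul_comm ((1 - x) ^ _)]
      exact mul_le_mul_of_nonneg_left (rpow_le_rpow_of_nonpos (by linarith)
        (one_sub_le_one_sub_mul_sin_sq hx₀ t) (by norm_num)) (sq_nonneg _)
  rw [intervalIntegral.integral_const_mul, integral_sin_sq, sin_zero, cos_pi_div_two] at hmono
  convert hmono using 2
  ring

end CompleteEllipticIntegrals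

section LogarithmicGrowth

variable {x : ℝ}

lemma integral_inv_add_pi_div_two_sub {e : ℝ} (he : 0 < e) :
    ∫ t in (0 : ℝ)..(π / 2), (e + π / 2 - t)⁻¹ = log ((e + π / 2) / e) := by
  rw [intervalIntegral.integral_comp_sub_left (fun s => s⁻¹), sub_zero, add_sub_cancel_right,
    integral_inv_of_pos he (by positivity)]

/-- The bound comes from `1 - x sin² t ≤ (√(1 - x) + cos t)²` and `cos t ≤ π/2 - t`. -/
lemma log_le_K (hx : x < 1) : log ((√(1 - x) + π / 2) / √(1 - x)) ≤ K x := by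
  set e := √(1 - x)
  have he : 0 < e := sqrt_pos.2 (by linarith)
  have he2 : e ^ 2 = 1 - x := sq_sqrt (by linarith)
  have hpt : ∀ t ∈ Icc (0 : ℝ) (π / 2),
      (e + π / 2 - t)⁻¹ ≤ (1 - x * sin t ^ 2) ^ (-(1/2) : ℝ) := by
    intro t ht
    have hcos : 0 ≤ cos t := cos_nonneg_of_mem_Icc ⟨by linarith [ht.1, pi_pos], ht.2⟩
    have hcos_le : cos t ≤ π / 2 - t := by
      simpa [sin_pi_div_two_sub] using sin_le (by linarith [ht.2] : 0 ≤ π / 2 - t)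
    have hec : 0 < e + cos t := by linarith
    have hsq : 1 - x * sin t ^ 2 ≤ (e + cos t) ^ 2 := by
      nlinarith [sin_sq_add_cos_sq t, sin_sq_le_one t, mul_nonneg he.le hcos]
    calc (e + π / 2 - t)⁻¹ ≤ (e + cos t)⁻¹ := inv_anti₀ hec (by linarith)
      _ = ((e + cos t) ^ 2) ^ (-(1/2) : ℝ) := (sq_rpow_neg_one_half hec.le).symm
      _ ≤ (1 - x * sin t ^ 2) ^ (-(1/2) : ℝ) :=
        rpow_le_rpow_of_nonpos (one_sub_mul_sin_sq_pos hx t) hsq (by norm_num)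
  have hint : IntervalIntegrable (fun t => (e + π / 2 - t)⁻¹) volume 0 (π / 2) :=
    intervalIntegral.intervalIntegrable_inv
      (fun t ht => by rw [uIcc_of_le pi_div_two_pos.le] at ht; linarith [ht.2])
      (by fun_prop)
  rw [← integral_inv_add_pi_div_two_sub he]
  exact intervalIntegral.integral_mono_on pi_div_two_pos.le hint
    (intervalIntegrable_one_sub_mul_sin_sq_rpow hx _ _ _) hpt

lemma exists_lt_K (M : ℝ) : ∃ x ∈ Ioo (0 : ℝ) 1, M < K x := by
  set e := π / (2 * (exp M + 2))
  have he : 0 < e := by positivity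
  have he1 : e < 1 := by
    rw [div_lt_one (by positivity)]
    linarith [pi_lt_four, exp_pos M]
  refine ⟨1 - e ^ 2, ⟨by nlinarith, by nlinarith⟩, ?_⟩
  have hratio : (e + π / 2) / e = exp M + 3 := by
    simp only [e]
    field_simp
    ring
  calc M = log (exp M) := (log_exp M).symm
    _ < log (exp M + 3) := log_lt_log (exp_pos M) (by linarith)
    _ = log ((√(1 - (1 - e ^ 2)) + π / 2) / √(1 - (1 - e ^ 2))) := by
      rw [sub_sub_cancel, sqrt_sq he.le, hratio]
    _ ≤ K (1 - e ^ 2) := log_le_K (by nlinarith)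

end LogarithmicGrowth

section CauchySchwarz

variable {x : ℝ}

lemma E_lt_K (hx₀ : 0 < x) (hx : x < 1) : E x < K x := by
  have := K_sub_E_eq hx
  have := mul_pos hx₀ (integral_sin_sq_mul_rpow_pos hx)
  linarith

/-- Strict Cauchy–Schwarz for `K = ∫ u^{1/4} u^{-3/4}`, with `∫ u^{1/2} = E` and
`∫ u^{-3/2} = E / (1 - x)`. -/
lemma sq_K_mul_one_sub_lt_sq_E (hx₀ : 0 < x) (hx : x < 1) : K x ^ 2 * (1 - x) < E x ^ 2 := by
  have hint := intervalIntegrable_one_sub_mul_sin_sq_rpow hx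
  have hlt := intervalIntegral.integral_lt_integral_of_continuousOn_of_le_of_exists_lt
    (f := fun t => 2 * K x * E x * (1 - x * sin t ^ 2) ^ (-(1/2) : ℝ))
    (g := fun t => K x ^ 2 * (1 - x * sin t ^ 2) ^ (1/2 : ℝ) +
      E x ^ 2 * (1 - x * sin t ^ 2) ^ (-(3/2) : ℝ))
    pi_div_two_pos
    ((continuous_const.mul (continuous_one_sub_mul_sin_sq_rpow hx _)).continuousOn)
    (((continuous_const.mul (continuous_one_sub_mul_sin_sq_rpow hx _)).add
      (continuous_const.mul (continuous_one_sub_mul_sin_sq_rpow hx _))).continuousOn)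
    (fun t _ => by
      have hu := one_sub_mul_sin_sq_pos hx t
      rw [rpow_one_half_eq hu, rpow_neg_one_half_eq hu]
      linear_combination mul_nonneg (rpow_nonneg hu.le (-(3/2) : ℝ))
        (sq_nonneg (K x * (1 - x * sin t ^ 2) - E x)))
    ⟨0, left_mem_Icc.2 pi_div_two_pos.le, by
      have := E_lt_K hx₀ hx
      simp only [sin_zero, ne_eq, OfNat.ofNat_ne_zero, not_false_eq_true, zero_pow, mul_zero,
        sub_zero, one_rpow, mul_one]
      nlinarith⟩
  rw [intervalIntegral.integral_const_mul, intervalIntegral.integral_add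
    ((hint _ _ _).const_mul _) ((hint _ _ _).const_mul _), intervalIntegral.integral_const_mul,
    intervalIntegral.integral_const_mul] at hlt
  change 2 * K x * E x * K x < K x ^ 2 * E x + E x ^ 2 * ellipticMoment (-(3/2)) x at hlt
  have hJ := one_sub_mul_ellipticMoment_neg_three_halves hx
  have hE := E_pos hx
  nlinarith [mul_lt_mul_of_pos_right hlt (by linarith : 0 < 1 - x)]

end CauchySchwarz

noncomputable def keRatio (x : ℝ) : ℝ := (K x - E x) / (x * K x)

section KERatio

variable {x : ℝ}

lemma hasDerivAt_keRatio (hx₀ : 0 < x) (hx : x < 1) :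
    HasDerivAt keRatio ((E x ^ 2 - K x ^ 2 * (1 - x)) / (2 * (1 - x) * (x * K x) ^ 2)) x := by
  have hK := hasDerivAt_K hx hx₀.ne'
  have hxK : x * K x ≠ 0 := (mul_pos hx₀ (K_pos hx₀.le hx)).ne'
  refine ((hK.sub (hasDerivAt_E hx hx₀.ne')).div ((hasDerivAt_id' x).mul hK) hxK).congr_deriv ?_
  simp only [Pi.mul_apply, Pi.sub_apply]
  field_simp [sub_ne_zero.2 hx.ne']
  ring

lemma strictMonoOn_keRatio : StrictMonoOn keRatio (Ioo 0 1) :=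
  strictMonoOn_Ioo_of_hasDerivAt_pos (fun _ hx => hasDerivAt_keRatio hx.1 hx.2) fun _ hx =>
    div_pos (sub_pos.2 (sq_K_mul_one_sub_lt_sq_E hx.1 hx.2))
      (mul_pos (mul_pos two_pos (sub_pos.2 hx.2)) (pow_pos (mul_pos hx.1 (K_pos hx.1.le hx.2)) 2))

lemma keRatio_le (hx₀ : 0 < x) (hx : x < 1) : keRatio x ≤ (1 - x) ^ (-(1/2) : ℝ) / 2 := by
  have hK := pi_div_two_le_K hx₀.le hx
  have hI := integral_sin_sq_mul_rpow_le hx₀.le hx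
  rw [keRatio, K_sub_E_eq hx, mul_div_mul_left _ _ hx₀.ne', div_le_iff₀ (K_pos hx₀.le hx)]
  nlinarith [rpow_pos_of_pos (sub_pos.2 hx) (-(1/2) : ℝ)]

lemma exists_keRatio_lt {q : ℝ} (hq : 1 / 2 < q) : ∃ x ∈ Ioo (0 : ℝ) 1, keRatio x < q := by
  set s := (1 + (2 * q)⁻¹) / 2 with hs_def
  have hq' : (2 * q)⁻¹ < 1 := inv_lt_one_of_one_lt₀ (by linarith)
  have hs : 0 < s := by positivity
  have hs1 : s < 1 := by linarith
  have hx : 1 - s ^ 2 ∈ Ioo (0 : ℝ) 1 := ⟨by nlinarith, by nlinarith⟩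
  refine ⟨1 - s ^ 2, hx, (keRatio_le hx.1 hx.2).trans_lt ?_⟩
  rw [sub_sub_cancel, sq_rpow_neg_one_half hs.le, div_lt_iff₀ two_pos,
    inv_lt_iff_one_lt_mul₀ hs]
  have : s * (2 * q) = q + 1 / 2 := by
    rw [hs_def]
    field_simp
  linarith

lemma exists_lt_keRatio {q : ℝ} (hq : q < 1) : ∃ x ∈ Ioo (0 : ℝ) 1, q < keRatio x := by
  obtain ⟨x, ⟨hx₀, hx⟩, hKx⟩ := exists_lt_K ((π / 2) / (1 - q))
  refine ⟨x, ⟨hx₀, hx⟩, ?_⟩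
  have hK := K_pos hx₀.le hx
  have hE := E_le_pi_div_two hx₀.le hx
  have hKE := (E_lt_K hx₀ hx).le
  rw [div_lt_iff₀ (sub_pos.2 hq)] at hKx
  calc q < (K x - E x) / K x := by rw [lt_div_iff₀ hK]; nlinarith
    _ ≤ keRatio x := div_le_div_of_nonneg_left (sub_nonneg.2 hKE) (mul_pos hx₀ hK)
        (mul_le_of_le_one_left hK.le hx.le)

lemma exists_keRatio_eq {q : ℝ} (hq₁ : 1 / 2 < q) (hq₂ : q < 1) :
    ∃ x ∈ Ioo (0 : ℝ) 1, keRatio x = q := by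
  obtain ⟨a, ha, hWa⟩ := exists_keRatio_lt hq₁
  obtain ⟨b, hb, hWb⟩ := exists_lt_keRatio hq₂
  exact isPreconnected_Ioo.intermediate_value ha hb
    (fun x hx => (hasDerivAt_keRatio hx.1 hx.2).continuousAt.continuousWithinAt)
    ⟨hWa.le, hWb.le⟩

lemma E_add_mul_K_eq_zero_iff (q : ℝ) (hx₀ : 0 < x) (hx : x < 1) :
    E x + (q * x - 1) * K x = 0 ↔ keRatio x = q := by
  have hK := K_pos hx₀.le hx
  have : E x + (q * x - 1) * K x = x * K x * (q - keRatio x) := by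
    rw [keRatio]
    field_simp
    ring
  rw [this, mul_eq_zero, or_iff_right (mul_pos hx₀ hK).ne', sub_eq_zero, eq_comm]

end KERatio

section Monotonicity

variable {p : ℝ}

lemma hasDerivAt_one_sub_rpow_mul_K {x : ℝ} (hx₀ : 0 < x) (hx : x < 1) :
    HasDerivAt (fun y => (1 - y) ^ p * K y)
      ((1 - x) ^ (p - 1) * K x / 2 * (1 - 2 * p - keRatio x)) x := by
  have h1x : 0 < 1 - x := sub_pos.2 hx
  refine ((((hasDerivAt_id' x).const_sub 1).rpow_const (p := p) (Or.inl h1x.ne')).mul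
    (hasDerivAt_K hx hx₀.ne')).congr_deriv ?_
  rw [keRatio, show (1 - x) ^ p = (1 - x) ^ (p - 1) * (1 - x) by
    rw [← rpow_add_one h1x.ne']; ring_nf]
  field_simp [(K_pos hx₀.le hx).ne']
  ring

lemma strictMonoOn_one_sub_rpow_mul_K {a b : ℝ} (hab : Ioo a b ⊆ Ioo 0 1)
    (h : ∀ x ∈ Ioo a b, keRatio x < 1 - 2 * p) :
    StrictMonoOn (fun x => (1 - x) ^ p * K x) (Ioo a b) :=
  strictMonoOn_Ioo_of_hasDerivAt_pos
    (fun _ hx => hasDerivAt_one_sub_rpow_mul_K (hab hx).1 (hab hx).2)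
    fun x hx => mul_pos (div_pos (mul_pos (rpow_pos_of_pos (sub_pos.2 (hab hx).2) _)
      (K_pos (hab hx).1.le (hab hx).2)) two_pos) (sub_pos.2 (h x hx))

lemma strictAntiOn_one_sub_rpow_mul_K {a b : ℝ} (hab : Ioo a b ⊆ Ioo 0 1)
    (h : ∀ x ∈ Ioo a b, 1 - 2 * p < keRatio x) :
    StrictAntiOn (fun x => (1 - x) ^ p * K x) (Ioo a b) :=
  strictAntiOn_Ioo_of_hasDerivAt_neg
    (fun _ hx => hasDerivAt_one_sub_rpow_mul_K (hab hx).1 (hab hx).2)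
    fun x hx => mul_neg_of_pos_of_neg
      (div_pos (mul_pos (rpow_pos_of_pos (sub_pos.2 (hab hx).2) _)
        (K_pos (hab hx).1.le (hab hx).2)) two_pos) (sub_neg.2 (h x hx))

end Monotonicity

theorem stmt16 (p : ℝ) (hp : p ∈ Ioo (0 : ℝ) (1/4)) :
    ∃! xp : ℝ, xp ∈ Ioo (0 : ℝ) 1 ∧
      StrictMonoOn (fun x : ℝ => (1 - x) ^ p * K x) (Ioo 0 xp) ∧
      StrictAntiOn (fun x : ℝ => (1 - x) ^ p * K x) (Ioo xp 1) ∧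
      (∀ y ∈ Ioo (0 : ℝ) 1, E y + ((1 - 2 * p) * y - 1) * K y = 0 ↔ y = xp) := by
  obtain ⟨hp₀, hp₁⟩ := hp
  obtain ⟨xp, hxp, hxp_ratio⟩ := exists_keRatio_eq (q := 1 - 2 * p) (by linarith) (by linarith)
  have hzero : ∀ y ∈ Ioo (0 : ℝ) 1, E y + ((1 - 2 * p) * y - 1) * K y = 0 ↔ y = xp :=
    fun y hy => (E_add_mul_K_eq_zero_iff _ hy.1 hy.2).trans
      (hxp_ratio ▸ strictMonoOn_keRatio.injOn.eq_iff hy hxp)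
  refine ⟨xp, ⟨hxp, ?_, ?_, hzero⟩, fun y hy => ?_⟩
  · exact strictMonoOn_one_sub_rpow_mul_K (Ioo_subset_Ioo_right hxp.2.le) fun y hy =>
      hxp_ratio ▸ strictMonoOn_keRatio ⟨hy.1, hy.2.trans hxp.2⟩ hxp hy.2
  · exact strictAntiOn_one_sub_rpow_mul_K (Ioo_subset_Ioo_left hxp.1.le) fun y hy =>
      hxp_ratio ▸ strictMonoOn_keRatio hxp ⟨hxp.1.trans hy.1, hy.2⟩ hy.1
  · exact ((hy.2.2.2 xp hxp).1 ((hzero xp hxp).2 rfl)).symm
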